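/- arXiv:2412.08052 — 4 statements merged into one kernel-verified Lean document; each statement's English description precedes it below -/
import Mathlib

section
/- The variance of the importance sampling estimator decomposes as N·Var[V̂^IS] = Var_{s~d_0}[v^{π_e}(s)] + E_{s~d_0}[Var_{a~π_b(·|s)}[ρ_s(a) R̄(s,a)]] + E_{s~d_0}[E_{a~π_b(·|s)}[ρ_s(a)² σ_R²(s,a)]], where v^{π_e}(s) = Σ_a π_e(a|s) R̄(s,a). -/
open Finset

lemma sum_pi_prod {T : Type*} [Fintype T] {N : ℕ} (G : Fin N → T → ℝ) :
    ∑ f : Fin N → T, ∏ k, G k (f k) = ∏ k, ∑ t, G k t := by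
  rw [← Finset.sum_prod_piFinset Finset.univ G, Fintype.piFinset_univ]

lemma mom1 {T : Type*} [Fintype T] {N : ℕ} (ν g : T → ℝ) (hν : ∑ t, ν t = 1) (i : Fin N) :
    ∑ f : Fin N → T, (∏ k, ν (f k)) * g (f i) = ∑ t, ν t * g t := by
  classical
  have h1 : ∀ f : Fin N → T, (∏ k, ν (f k)) * g (f i)
      = ∏ k, (ν (f k) * if k = i then g (f k) else 1) := by
    intro f
    rw [Finset.prod_mul_distrib, Finset.prod_ite_eq' Finset.univ i (fun k => g (f k))]
    simp
  simp_rw [h1]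
  rw [sum_pi_prod (fun k t => ν t * if k = i then g t else 1)]
  have h2 : ∀ k : Fin N, (∑ t, (ν t * if k = i then g t else 1))
      = if k = i then ∑ t, ν t * g t else 1 := by
    intro k
    by_cases hk : k = i
    · simp [hk]
    · simp [hk, hν]
  simp_rw [h2]
  rw [Finset.prod_ite_eq' Finset.univ i (fun _ => ∑ t, ν t * g t)]
  simp

lemma mom2 {T : Type*} [Fintype T] {N : ℕ} (ν g h : T → ℝ) (hν : ∑ t, ν t = 1)
    {i j : Fin N} (hij : i ≠ j) :
    ∑ f : Fin N → T, (∏ k, ν (f k)) * (g (f i) * h (f j))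
      = (∑ t, ν t * g t) * (∑ t, ν t * h t) := by
  classical
  have h1 : ∀ f : Fin N → T, (∏ k, ν (f k)) * (g (f i) * h (f j))
      = ∏ k, (ν (f k) * ((if k = i then g (f k) else 1) * (if k = j then h (f k) else 1))) := by
    intro f
    rw [Finset.prod_mul_distrib, Finset.prod_mul_distrib,
      Finset.prod_ite_eq' Finset.univ i (fun k => g (f k)),
      Finset.prod_ite_eq' Finset.univ j (fun k => h (f k))]
    simp
  simp_rw [h1]
  rw [sum_pi_prod (fun k t => ν t * ((if k = i then g t else 1) * (if k = j then h t else 1)))]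
  have h2 : ∀ k : Fin N, (∑ t, ν t * ((if k = i then g t else 1) * (if k = j then h t else 1)))
      = (if k = i then ∑ t, ν t * g t else 1) * (if k = j then ∑ t, ν t * h t else 1) := by
    intro k
    by_cases hk : k = i
    · subst hk; simp [hij, hν]
    · by_cases hk2 : k = j
      · subst hk2; simp [hk, hν]
      · simp [hk, hk2, hν]
  simp_rw [h2]
  rw [Finset.prod_mul_distrib, Finset.prod_ite_eq' Finset.univ i (fun _ => ∑ t, ν t * g t),
    Finset.prod_ite_eq' Finset.univ j (fun _ => ∑ t, ν t * h t)]
  simp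

/-- **Variance decomposition of the IS estimator.**
With `N` i.i.d. samples `(s_i, a_i, r_i)` (contexts `s_i ~ d0`, actions `a_i ~ πb(·|s_i)`,
rewards with distribution `P s a` and values `r s a`, mean `R̄` and variance `σ2`),
the IS estimator `V̂ = (1/N) Σ_i ρ_{s_i}(a_i) r_i` satisfies
`N·Var[V̂] = Var_{s~d0}[v^{πe}(s)] + E_{s~d0}[Var_{a~πb(·|s)}[ρ_s(a) R̄(s,a)]]
           + E_{s~d0}[E_{a~πb(·|s)}[ρ_s(a)² σ_R²(s,a)]]`. -/
theorem is_estimator_variance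
    {S A Ω : Type*} [Fintype S] [Fintype A] [Fintype Ω]
    (d0 : S → ℝ) (πb πe : S → A → ℝ)
    (P : S → A → Ω → ℝ) (r : S → A → Ω → ℝ)
    (hd00 : ∀ s, 0 ≤ d0 s) (hd01 : ∑ s, d0 s = 1)
    (hπb0 : ∀ s a, 0 ≤ πb s a) (hπb1 : ∀ s, ∑ a, πb s a = 1)
    (hπe0 : ∀ s a, 0 ≤ πe s a) (hπe1 : ∀ s, ∑ a, πe s a = 1)
    (hP0 : ∀ s a ω, 0 ≤ P s a ω) (hP1 : ∀ s a, ∑ ω, P s a ω = 1)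
    (hsupp : ∀ s a, 0 < πe s a → 0 < πb s a)
    (N : ℕ) (hN : 0 < N)
    (Rbar σ2 : S → A → ℝ)
    (hRbar : ∀ s a, Rbar s a = ∑ ω, P s a ω * r s a ω)
    (hσ2 : ∀ s a, σ2 s a = ∑ ω, P s a ω * (r s a ω - Rbar s a) ^ 2)
    (vπe : S → ℝ) (hv : ∀ s, vπe s = ∑ a, πe s a * Rbar s a)
    (μ : (Fin N → S × A × Ω) → ℝ)
    (hμ : ∀ f, μ f = ∏ i, d0 (f i).1 * πb (f i).1 (f i).2.1 * P (f i).1 (f i).2.1 (f i).2.2)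
    (V : (Fin N → S × A × Ω) → ℝ)
    (hV : ∀ f, V f = (N : ℝ)⁻¹ * ∑ i, (πe (f i).1 (f i).2.1 / πb (f i).1 (f i).2.1) *
        r (f i).1 (f i).2.1 (f i).2.2) :
    (N : ℝ) * ((∑ f : Fin N → S × A × Ω, μ f * (V f) ^ 2)
        - (∑ f : Fin N → S × A × Ω, μ f * V f) ^ 2)
      = ((∑ s, d0 s * (vπe s) ^ 2) - (∑ s, d0 s * vπe s) ^ 2)
        + (∑ s, d0 s * ((∑ a, πb s a * ((πe s a / πb s a) * Rbar s a) ^ 2)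
              - (∑ a, πb s a * ((πe s a / πb s a) * Rbar s a)) ^ 2))
        + (∑ s, d0 s * ∑ a, πb s a * (πe s a / πb s a) ^ 2 * σ2 s a) := by
  classical
  set ν : S × A × Ω → ℝ := fun p => d0 p.1 * πb p.1 p.2.1 * P p.1 p.2.1 p.2.2 with hνdef
  set X : S × A × Ω → ℝ := fun p => (πe p.1 p.2.1 / πb p.1 p.2.1) * r p.1 p.2.1 p.2.2 with hXdef
  have hNR : (N:ℝ) ≠ 0 := Nat.cast_ne_zero.mpr hN.ne'
  -- ν is a probability mass
  have hν1 : ∑ t, ν t = 1 := by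
    simp only [hνdef, Fintype.sum_prod_type]
    have h1 : ∀ s a, ∑ ω, d0 s * πb s a * P s a ω = d0 s * πb s a := by
      intro s a; rw [← Finset.mul_sum, hP1, mul_one]
    simp_rw [h1]
    have h2 : ∀ s, ∑ a, d0 s * πb s a = d0 s := by
      intro s; rw [← Finset.mul_sum, hπb1, mul_one]
    simp_rw [h2, hd01]
  -- ρ cancellation
  have hrho : ∀ s a, πb s a * (πe s a / πb s a) = πe s a := by
    intro s a
    rcases eq_or_lt_of_le (hπb0 s a) with h | h
    · have hπe : πe s a = 0 := by
        by_contra hne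
        have := hsupp s a (lt_of_le_of_ne (hπe0 s a) (Ne.symm hne))
        rw [← h] at this; exact lt_irrefl 0 this
      rw [← h, hπe]; simp
    · field_simp
  -- first moment of X equals ∑ d0 vπe
  have hEg : ∑ t, ν t * X t = ∑ s, d0 s * vπe s := by
    simp only [hνdef, hXdef, Fintype.sum_prod_type]
    have inner : ∀ s a, ∑ ω, (d0 s * πb s a * P s a ω) *
        ((πe s a / πb s a) * r s a ω) = d0 s * (πe s a * Rbar s a) := by
      intro s a
      have h : ∀ ω, (d0 s * πb s a * P s a ω) * ((πe s a / πb s a) * r s a ω)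
          = d0 s * ((πb s a * (πe s a / πb s a)) * (P s a ω * r s a ω)) := fun ω => by ring
      simp_rw [h, hrho]
      rw [← Finset.mul_sum, ← Finset.mul_sum, ← hRbar]
    simp_rw [inner]
    refine Finset.sum_congr rfl fun s _ => ?_
    rw [← Finset.mul_sum, ← hv]
  -- second moment helper
  have hMom : ∀ s a, ∑ ω, P s a ω * (r s a ω)^2 = σ2 s a + (Rbar s a)^2 := by
    intro s a
    have h1 : σ2 s a = (∑ ω, P s a ω * r s a ω ^ 2) - 2 * Rbar s a * Rbar s a + Rbar s a ^ 2 := by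
      rw [hσ2 s a]
      have h : ∀ ω, P s a ω * (r s a ω - Rbar s a)^2
          = P s a ω * r s a ω ^ 2 - 2 * Rbar s a * (P s a ω * r s a ω)
            + Rbar s a ^ 2 * P s a ω := fun ω => by ring
      simp_rw [h]
      rw [Finset.sum_add_distrib, Finset.sum_sub_distrib, ← Finset.mul_sum, ← Finset.mul_sum,
        ← hRbar, hP1, mul_one]
    rw [h1]; ring
  have hE2 : ∑ t, ν t * (X t * X t)
      = ∑ s, d0 s * ∑ a, πb s a * (πe s a / πb s a)^2 * (σ2 s a + Rbar s a ^ 2) := by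
    simp only [hνdef, hXdef, Fintype.sum_prod_type]
    have inner2 : ∀ s a, ∑ ω, (d0 s * πb s a * P s a ω) *
        (((πe s a / πb s a) * r s a ω) * ((πe s a / πb s a) * r s a ω))
        = d0 s * (πb s a * (πe s a / πb s a)^2 * (σ2 s a + Rbar s a ^ 2)) := by
      intro s a
      have h : ∀ ω, (d0 s * πb s a * P s a ω) *
          (((πe s a / πb s a) * r s a ω) * ((πe s a / πb s a) * r s a ω))
          = d0 s * (πb s a * (πe s a / πb s a)^2 * (P s a ω * r s a ω ^ 2)) := fun ω => by ring
      simp_rw [h]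
      rw [← Finset.mul_sum, ← Finset.mul_sum, hMom]
    simp_rw [inner2]
    refine Finset.sum_congr rfl fun s _ => ?_
    rw [← Finset.mul_sum]
  -- first moment of the estimator
  have hA : ∑ f : Fin N → S × A × Ω, μ f * V f = ∑ t, ν t * X t := by
    calc ∑ f : Fin N → S × A × Ω, μ f * V f
        = ∑ f : Fin N → S × A × Ω, (N:ℝ)⁻¹ * ∑ i, (∏ k, ν (f k)) * X (f i) := by
          refine Finset.sum_congr rfl fun f _ => ?_
          simp only [hνdef, hXdef, hμ f, hV f, Finset.mul_sum]
          exact Finset.sum_congr rfl fun i _ => by ring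
      _ = (N:ℝ)⁻¹ * ∑ i, ∑ f : Fin N → S × A × Ω, (∏ k, ν (f k)) * X (f i) := by
          rw [← Finset.mul_sum, Finset.sum_comm]
      _ = (N:ℝ)⁻¹ * ∑ _i : Fin N, ∑ t, ν t * X t := by
          rw [Finset.sum_congr rfl fun i _ => mom1 ν X hν1 i]
      _ = ∑ t, ν t * X t := by
          rw [Finset.sum_const, Finset.card_univ, Fintype.card_fin, nsmul_eq_mul,
            ← mul_assoc, inv_mul_cancel₀ hNR, one_mul]
  -- second moment of the estimator
  have hB : ∑ f : Fin N → S × A × Ω, μ f * (V f) ^ 2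
      = (N:ℝ)⁻¹ * (N:ℝ)⁻¹ * ((N:ℝ) * ((∑ t, ν t * (X t * X t))
          + ((N:ℝ) - 1) * ((∑ t, ν t * X t) * (∑ t, ν t * X t)))) := by
    have hcross : ∀ i j : Fin N, ∑ f : Fin N → S × A × Ω, (∏ k, ν (f k)) * (X (f i) * X (f j))
        = if i = j then (∑ t, ν t * (X t * X t))
          else (∑ t, ν t * X t) * (∑ t, ν t * X t) := by
      intro i j
      by_cases h : i = j
      · subst h; rw [if_pos rfl]; exact mom1 ν (fun t => X t * X t) hν1 i
      · rw [if_neg h]; exact mom2 ν X X hν1 h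
    calc ∑ f : Fin N → S × A × Ω, μ f * (V f) ^ 2
        = ∑ f : Fin N → S × A × Ω, (N:ℝ)⁻¹ * (N:ℝ)⁻¹ *
            ∑ i, ∑ j, (∏ k, ν (f k)) * (X (f i) * X (f j)) := by
          refine Finset.sum_congr rfl fun f _ => ?_
          rw [hμ f, hV f, mul_pow, sq, sq, Finset.sum_mul_sum, mul_left_comm]
          simp only [hνdef, hXdef]
          congr 1
          rw [Finset.mul_sum]
          refine Finset.sum_congr rfl fun i _ => ?_
          rw [Finset.mul_sum]
      _ = (N:ℝ)⁻¹ * (N:ℝ)⁻¹ * ∑ i, ∑ j, ∑ f : Fin N → S × A × Ω,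
            (∏ k, ν (f k)) * (X (f i) * X (f j)) := by
          rw [← Finset.mul_sum, Finset.sum_comm]
          congr 1
          exact Finset.sum_congr rfl fun i _ => Finset.sum_comm
      _ = (N:ℝ)⁻¹ * (N:ℝ)⁻¹ * ∑ i : Fin N, ∑ j : Fin N,
            (if i = j then (∑ t, ν t * (X t * X t))
              else (∑ t, ν t * X t) * (∑ t, ν t * X t)) := by
          congr 1
          exact Finset.sum_congr rfl fun i _ => Finset.sum_congr rfl fun j _ => hcross i j
      _ = (N:ℝ)⁻¹ * (N:ℝ)⁻¹ * ((N:ℝ) * ((∑ t, ν t * (X t * X t))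
            + ((N:ℝ) - 1) * ((∑ t, ν t * X t) * (∑ t, ν t * X t)))) := by
          congr 1
          have hrow : ∀ i : Fin N, ∑ j : Fin N,
              (if i = j then (∑ t, ν t * (X t * X t))
                else (∑ t, ν t * X t) * (∑ t, ν t * X t))
              = (∑ t, ν t * (X t * X t))
                + ((N:ℝ) - 1) * ((∑ t, ν t * X t) * (∑ t, ν t * X t)) := by
            intro i
            have h : ∀ j : Fin N, (if i = j then (∑ t, ν t * (X t * X t))
                else (∑ t, ν t * X t) * (∑ t, ν t * X t))
                = (∑ t, ν t * X t) * (∑ t, ν t * X t)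
                  + (if i = j then (∑ t, ν t * (X t * X t))
                      - (∑ t, ν t * X t) * (∑ t, ν t * X t) else 0) := by
              intro j; by_cases h : i = j <;> simp [h]
            simp_rw [h]
            rw [Finset.sum_add_distrib, Finset.sum_const, Finset.sum_ite_eq,
              if_pos (Finset.mem_univ i), Finset.card_univ, Fintype.card_fin, nsmul_eq_mul]
            ring
          rw [Finset.sum_congr rfl fun i _ => hrow i, Finset.sum_const, Finset.card_univ,
            Fintype.card_fin, nsmul_eq_mul]
  -- main reduction
  have main : (N : ℝ) * ((∑ f : Fin N → S × A × Ω, μ f * (V f) ^ 2)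
      - (∑ f : Fin N → S × A × Ω, μ f * V f) ^ 2)
      = (∑ t, ν t * (X t * X t)) - (∑ t, ν t * X t) ^ 2 := by
    rw [hA, hB]
    field_simp
    ring
  rw [main, hEg, hE2]
  -- RHS algebra
  have hvb : ∀ s, ∑ a, πb s a * ((πe s a / πb s a) * Rbar s a) = vπe s := by
    intro s; rw [hv]
    exact Finset.sum_congr rfl fun a _ => by rw [← mul_assoc, hrho]
  simp_rw [hvb]
  have hsplit : ∀ s, d0 s * ∑ a, πb s a * (πe s a / πb s a)^2 * (σ2 s a + Rbar s a ^ 2)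
      = d0 s * (∑ a, πb s a * ((πe s a / πb s a) * Rbar s a) ^ 2)
        + d0 s * ∑ a, πb s a * (πe s a / πb s a) ^ 2 * σ2 s a := by
    intro s
    rw [← mul_add]
    congr 1
    rw [← Finset.sum_add_distrib]
    exact Finset.sum_congr rfl fun a _ => by ring
  simp_rw [hsplit, mul_sub]
  rw [Finset.sum_add_distrib, Finset.sum_sub_distrib]
  ring
end

section
/- The variance of the doubly robust estimator with a fixed reward model R̂ satisfies N·Var[V̂^DR] = Var_{s~d_0}[v^{π_e}(s)] + E_{s~d_0}[Var_{a~π_b(·|s)}[ρ_s(a)(R̄(s,a) − R̂(s,a))]] + E_{s~d_0}[E_{a~π_b(·|s)}[ρ_s(a)² σ_R²(s,a)]]. -/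
open Finset

private lemma pi_sum_prod {T : Type*} [Fintype T] {N : ℕ} (g : Fin N → T → ℝ) :
    ∑ f : Fin N → T, ∏ i, g i (f i) = ∏ i, ∑ x, g i x := by
  rw [Finset.prod_univ_sum, Fintype.piFinset_univ]

private lemma iid_one {T : Type*} [Fintype T] {N : ℕ} (p X : T → ℝ)
    (hp : ∑ x, p x = 1) (i : Fin N) :
    ∑ f : Fin N → T, (∏ k, p (f k)) * X (f i) = ∑ x, p x * X x := by
  have h1 : ∀ f : Fin N → T,
      (∏ k, (p (f k) * (if k = i then X (f k) else 1))) = (∏ k, p (f k)) * X (f i) := by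
    intro f
    rw [Finset.prod_mul_distrib]
    congr 1
    simp
  rw [Finset.sum_congr rfl fun f _ => (h1 f).symm,
    pi_sum_prod (fun k x => p x * (if k = i then X x else 1))]
  have h2 : ∀ k : Fin N,
      (∑ x, p x * (if k = i then X x else 1)) = if k = i then (∑ x, p x * X x) else 1 := by
    intro k
    rcases eq_or_ne k i with rfl | h
    · simp
    · simp [h, hp]
  rw [Finset.prod_congr rfl fun k _ => h2 k]
  simp

private lemma iid_two {T : Type*} [Fintype T] {N : ℕ} (p X : T → ℝ)
    (hp : ∑ x, p x = 1) (i j : Fin N) (hij : i ≠ j) :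
    ∑ f : Fin N → T, (∏ k, p (f k)) * X (f i) * X (f j)
      = (∑ x, p x * X x) * (∑ x, p x * X x) := by
  have h1 : ∀ f : Fin N → T,
      (∏ k, (p (f k) * (if k = i then X (f k) else 1) * (if k = j then X (f k) else 1)))
        = (∏ k, p (f k)) * X (f i) * X (f j) := by
    intro f
    rw [Finset.prod_mul_distrib, Finset.prod_mul_distrib]
    simp
  rw [Finset.sum_congr rfl fun f _ => (h1 f).symm,
    pi_sum_prod (fun k x => p x * (if k = i then X x else 1) * (if k = j then X x else 1))]
  have h2 : ∀ k : Fin N,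
      (∑ x, p x * (if k = i then X x else 1) * (if k = j then X x else 1))
        = (if k = i then (∑ x, p x * X x) else 1) * (if k = j then (∑ x, p x * X x) else 1) := by
    intro k
    rcases eq_or_ne k i with rfl | hki
    · simp [hij]
    · rcases eq_or_ne k j with rfl | hkj
      · simp [hki]
      · simp [hki, hkj, hp]
  rw [Finset.prod_congr rfl fun k _ => h2 k, Finset.prod_mul_distrib]
  simp

private lemma iid_var {T : Type*} [Fintype T] {N : ℕ} (hN : 0 < N) (p X : T → ℝ)
    (hp : ∑ x, p x = 1) :
    (N : ℝ) * ((∑ f : Fin N → T, (∏ i, p (f i)) * ((N : ℝ)⁻¹ * ∑ i, X (f i)) ^ 2)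
        - (∑ f : Fin N → T, (∏ i, p (f i)) * ((N : ℝ)⁻¹ * ∑ i, X (f i))) ^ 2)
      = (∑ x, p x * X x ^ 2) - (∑ x, p x * X x) ^ 2 := by
  have hNne : (N : ℝ) ≠ 0 := Nat.cast_ne_zero.mpr hN.ne'
  have key1 : (∑ f : Fin N → T, (∏ i, p (f i)) * (∑ i, X (f i)))
      = (N : ℝ) * ∑ x, p x * X x := by
    have h1 : ∀ f : Fin N → T, (∏ i, p (f i)) * (∑ i, X (f i))
        = ∑ i, (∏ k, p (f k)) * X (f i) := fun f => Finset.mul_sum _ _ _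
    rw [Finset.sum_congr rfl fun f _ => h1 f, Finset.sum_comm,
      Finset.sum_congr rfl fun i _ => iid_one p X hp i, Finset.sum_const,
      Finset.card_univ, Fintype.card_fin, nsmul_eq_mul]
  have key2 : (∑ f : Fin N → T, (∏ i, p (f i)) * (∑ i, X (f i)) ^ 2)
      = (N : ℝ) * (∑ x, p x * X x ^ 2) + ((N : ℝ) ^ 2 - N) * (∑ x, p x * X x) ^ 2 := by
    have h1 : ∀ f : Fin N → T, (∏ i, p (f i)) * (∑ i, X (f i)) ^ 2
        = ∑ i, ∑ j, (∏ k, p (f k)) * X (f i) * X (f j) := by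
      intro f
      rw [sq, Finset.sum_mul_sum, Finset.mul_sum]
      refine Finset.sum_congr rfl fun i _ => ?_
      rw [Finset.mul_sum]
      exact Finset.sum_congr rfl fun j _ => by ring
    rw [Finset.sum_congr rfl fun f _ => h1 f, Finset.sum_comm,
      Finset.sum_congr rfl fun i _ => Finset.sum_comm]
    have h3 : ∀ i j : Fin N, (∑ f : Fin N → T, (∏ k, p (f k)) * X (f i) * X (f j))
        = if i = j then (∑ x, p x * X x ^ 2) else (∑ x, p x * X x) ^ 2 := by
      intro i j
      rcases eq_or_ne i j with rfl | hij
      · rw [if_pos rfl, ← iid_one p (fun x => X x ^ 2) hp i]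
        exact Finset.sum_congr rfl fun f _ => by ring
      · rw [if_neg hij, sq]
        exact iid_two p X hp i j hij
    rw [Finset.sum_congr rfl fun i _ => Finset.sum_congr rfl fun j _ => h3 i j]
    have h4 : ∀ i : Fin N,
        (∑ j : Fin N, if i = j then (∑ x, p x * X x ^ 2) else (∑ x, p x * X x) ^ 2)
          = (∑ x, p x * X x ^ 2) + ((N : ℝ) - 1) * (∑ x, p x * X x) ^ 2 := by
      intro i
      have h5 : ∀ j : Fin N,
          (if i = j then (∑ x, p x * X x ^ 2) else (∑ x, p x * X x) ^ 2)
            = (∑ x, p x * X x) ^ 2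
              + (if i = j then (∑ x, p x * X x ^ 2) - (∑ x, p x * X x) ^ 2 else 0) := by
        intro j; split_ifs <;> ring
      rw [Finset.sum_congr rfl fun j _ => h5 j, Finset.sum_add_distrib,
        Finset.sum_const, Finset.sum_ite_eq, if_pos (Finset.mem_univ i),
        Finset.card_univ, Fintype.card_fin, nsmul_eq_mul]
      ring
    rw [Finset.sum_congr rfl fun i _ => h4 i, Finset.sum_const, Finset.card_univ,
      Fintype.card_fin, nsmul_eq_mul]
    ring
  have e2 : (∑ f : Fin N → T, (∏ i, p (f i)) * ((N : ℝ)⁻¹ * ∑ i, X (f i)) ^ 2)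
      = ((N : ℝ)⁻¹) ^ 2 * ∑ f : Fin N → T, (∏ i, p (f i)) * (∑ i, X (f i)) ^ 2 := by
    rw [Finset.mul_sum]
    exact Finset.sum_congr rfl fun f _ => by ring
  have e1 : (∑ f : Fin N → T, (∏ i, p (f i)) * ((N : ℝ)⁻¹ * ∑ i, X (f i)))
      = (N : ℝ)⁻¹ * ∑ f : Fin N → T, (∏ i, p (f i)) * (∑ i, X (f i)) := by
    rw [Finset.mul_sum]
    exact Finset.sum_congr rfl fun f _ => by ring
  rw [e1, e2, key1, key2]
  field_simp
  ring

private lemma moments_mean {Ω : Type*} [Fintype Ω] (P r : Ω → ℝ) (hP1 : ∑ ω, P ω = 1)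
    (Rb : ℝ) (hRb : Rb = ∑ ω, P ω * r ω) (u w : ℝ) :
    (∑ ω, P ω * (u + w * r ω)) = u + w * Rb := by
  have h1 : ∀ ω, P ω * (u + w * r ω) = u * P ω + w * (P ω * r ω) := fun ω => by ring
  rw [Finset.sum_congr rfl fun ω _ => h1 ω, Finset.sum_add_distrib, ← Finset.mul_sum,
    ← Finset.mul_sum, hP1, ← hRb, mul_one]

private lemma moments_sq {Ω : Type*} [Fintype Ω] (P r : Ω → ℝ) (hP1 : ∑ ω, P ω = 1)
    (Rb s2 : ℝ) (hRb : Rb = ∑ ω, P ω * r ω) (hs2 : s2 = ∑ ω, P ω * (r ω - Rb) ^ 2)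
    (u w : ℝ) :
    (∑ ω, P ω * (u + w * r ω) ^ 2) = (u + w * Rb) ^ 2 + w ^ 2 * s2 := by
  have h2 : (∑ ω, P ω * r ω ^ 2) = s2 + Rb ^ 2 := by
    have h1 : ∀ ω, P ω * (r ω - Rb) ^ 2
        = P ω * r ω ^ 2 - 2 * Rb * (P ω * r ω) + Rb ^ 2 * P ω := fun ω => by ring
    rw [Finset.sum_congr rfl fun ω _ => h1 ω, Finset.sum_add_distrib,
      Finset.sum_sub_distrib, ← Finset.mul_sum, ← Finset.mul_sum, ← hRb, hP1] at hs2
    linear_combination -hs2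
  have h1 : ∀ ω, P ω * (u + w * r ω) ^ 2
      = u ^ 2 * P ω + 2 * u * w * (P ω * r ω) + w ^ 2 * (P ω * r ω ^ 2) := fun ω => by ring
  rw [Finset.sum_congr rfl fun ω _ => h1 ω, Finset.sum_add_distrib, Finset.sum_add_distrib,
    ← Finset.mul_sum, ← Finset.mul_sum, ← Finset.mul_sum, ← hRb, hP1, h2]
  ring

private noncomputable def pdef {S A Ω : Type*} (d0 : S → ℝ) (πb : S → A → ℝ) (P : S → A → Ω → ℝ) :
    S × A × Ω → ℝ :=
  fun x => d0 x.1 * πb x.1 x.2.1 * P x.1 x.2.1 x.2.2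

private noncomputable def Xdef {S A Ω : Type*} [Fintype A] (πb πe : S → A → ℝ) (Rhat : S → A → ℝ)
    (r : S → A → Ω → ℝ) : S × A × Ω → ℝ :=
  fun x => (∑ a, πe x.1 a * Rhat x.1 a)
    + (πe x.1 x.2.1 / πb x.1 x.2.1) * (r x.1 x.2.1 x.2.2 - Rhat x.1 x.2.1)

/-- **Variance decomposition of the doubly robust estimator.**
With a fixed reward model `Rhat`, the DR estimator satisfies
`N·Var[V̂^DR] = Var_{s~d0}[v^{πe}(s)]
  + E_{s~d0}[Var_{a~πb(·|s)}[ρ_s(a)(R̄(s,a) − Rhat(s,a))]]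
  + E_{s~d0}[E_{a~πb(·|s)}[ρ_s(a)² σ_R²(s,a)]]`. -/
theorem dr_estimator_variance
    {S A Ω : Type*} [Fintype S] [Fintype A] [Fintype Ω]
    (d0 : S → ℝ) (πb πe : S → A → ℝ)
    (P : S → A → Ω → ℝ) (r : S → A → Ω → ℝ)
    (Rhat : S → A → ℝ)
    (hd00 : ∀ s, 0 ≤ d0 s) (hd01 : ∑ s, d0 s = 1)
    (hπb0 : ∀ s a, 0 ≤ πb s a) (hπb1 : ∀ s, ∑ a, πb s a = 1)
    (hπe0 : ∀ s a, 0 ≤ πe s a) (hπe1 : ∀ s, ∑ a, πe s a = 1)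
    (hP0 : ∀ s a ω, 0 ≤ P s a ω) (hP1 : ∀ s a, ∑ ω, P s a ω = 1)
    (hsupp : ∀ s a, 0 < πe s a → 0 < πb s a)
    (N : ℕ) (hN : 0 < N)
    (Rbar σ2 : S → A → ℝ)
    (hRbar : ∀ s a, Rbar s a = ∑ ω, P s a ω * r s a ω)
    (hσ2 : ∀ s a, σ2 s a = ∑ ω, P s a ω * (r s a ω - Rbar s a) ^ 2)
    (vπe : S → ℝ) (hv : ∀ s, vπe s = ∑ a, πe s a * Rbar s a)
    (μ : (Fin N → S × A × Ω) → ℝ)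
    (hμ : ∀ f, μ f = ∏ i, d0 (f i).1 * πb (f i).1 (f i).2.1 * P (f i).1 (f i).2.1 (f i).2.2)
    (V : (Fin N → S × A × Ω) → ℝ)
    (hV : ∀ f, V f = (N : ℝ)⁻¹ * ∑ i,
        ((∑ a, πe (f i).1 a * Rhat (f i).1 a)
          + (πe (f i).1 (f i).2.1 / πb (f i).1 (f i).2.1) *
              (r (f i).1 (f i).2.1 (f i).2.2 - Rhat (f i).1 (f i).2.1))) :
    (N : ℝ) * ((∑ f : Fin N → S × A × Ω, μ f * (V f) ^ 2)
        - (∑ f : Fin N → S × A × Ω, μ f * V f) ^ 2)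
      = ((∑ s, d0 s * (vπe s) ^ 2) - (∑ s, d0 s * vπe s) ^ 2)
        + (∑ s, d0 s * ((∑ a, πb s a * ((πe s a / πb s a) * (Rbar s a - Rhat s a)) ^ 2)
              - (∑ a, πb s a * ((πe s a / πb s a) * (Rbar s a - Rhat s a))) ^ 2))
        + (∑ s, d0 s * ∑ a, πb s a * (πe s a / πb s a) ^ 2 * σ2 s a) := by
  -- basic facts
  have hbe : ∀ s a, πb s a * (πe s a / πb s a) = πe s a := by
    intro s a
    rcases eq_or_lt_of_le (hπb0 s a) with h | h
    · have he : πe s a = 0 := by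
        by_contra hne
        have h1 := hsupp s a ((hπe0 s a).lt_of_ne (Ne.symm hne))
        rw [← h] at h1
        exact lt_irrefl 0 h1
      simp [he]
    · field_simp
  have hp1 : (∑ x : S × A × Ω, pdef d0 πb P x) = 1 := by
    rw [Fintype.sum_prod_type]
    have h1 : ∀ s, (∑ q : A × Ω, pdef d0 πb P (s, q)) = d0 s := by
      intro s
      rw [Fintype.sum_prod_type]
      have h2 : ∀ a, (∑ ω, pdef d0 πb P (s, a, ω)) = d0 s * πb s a := by
        intro a
        simp only [pdef]
        rw [← Finset.mul_sum, hP1, mul_one]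
      rw [Finset.sum_congr rfl fun a _ => h2 a, ← Finset.mul_sum, hπb1, mul_one]
    rw [Finset.sum_congr rfl fun s _ => h1 s, hd01]
  -- mean of a single sample
  have hM1 : (∑ x : S × A × Ω, pdef d0 πb P x * Xdef πb πe Rhat r x)
      = ∑ s, d0 s * vπe s := by
    rw [Fintype.sum_prod_type]
    refine Finset.sum_congr rfl fun s _ => ?_
    rw [Fintype.sum_prod_type]
    have hin : ∀ a, (∑ ω, pdef d0 πb P (s, a, ω) * Xdef πb πe Rhat r (s, a, ω))
        = d0 s * πb s a * ((∑ a', πe s a' * Rhat s a')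
            + (πe s a / πb s a) * (Rbar s a - Rhat s a)) := by
      intro a
      have h1 : ∀ ω, pdef d0 πb P (s, a, ω) * Xdef πb πe Rhat r (s, a, ω)
          = d0 s * πb s a * (P s a ω * (((∑ a', πe s a' * Rhat s a')
              - (πe s a / πb s a) * Rhat s a) + (πe s a / πb s a) * r s a ω)) := by
        intro ω; simp only [pdef, Xdef]; ring
      rw [Finset.sum_congr rfl fun ω _ => h1 ω, ← Finset.mul_sum,
        moments_mean (P s a) (r s a) (hP1 s a) (Rbar s a) (hRbar s a) _ _]
      ring
    rw [Finset.sum_congr rfl fun a _ => hin a]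
    have h2 : ∀ a, d0 s * πb s a * ((∑ a', πe s a' * Rhat s a')
          + (πe s a / πb s a) * (Rbar s a - Rhat s a))
        = d0 s * ((∑ a', πe s a' * Rhat s a') * πb s a
            + (πe s a * Rbar s a - πe s a * Rhat s a)) := by
      intro a
      linear_combination d0 s * (Rbar s a - Rhat s a) * hbe s a
    rw [Finset.sum_congr rfl fun a _ => h2 a, ← Finset.mul_sum]
    congr 1
    rw [Finset.sum_add_distrib, ← Finset.mul_sum, hπb1, Finset.sum_sub_distrib, hv s]
    ring
  -- second moment of a single sample
  have hM2 : (∑ x : S × A × Ω, pdef d0 πb P x * Xdef πb πe Rhat r x ^ 2)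
      = ∑ s, d0 s * ∑ a, πb s a * (((∑ a', πe s a' * Rhat s a')
          + (πe s a / πb s a) * (Rbar s a - Rhat s a)) ^ 2
          + (πe s a / πb s a) ^ 2 * σ2 s a) := by
    rw [Fintype.sum_prod_type]
    refine Finset.sum_congr rfl fun s _ => ?_
    rw [Fintype.sum_prod_type, Finset.mul_sum]
    refine Finset.sum_congr rfl fun a _ => ?_
    have h1 : ∀ ω, pdef d0 πb P (s, a, ω) * Xdef πb πe Rhat r (s, a, ω) ^ 2
        = d0 s * πb s a * (P s a ω * (((∑ a', πe s a' * Rhat s a')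
            - (πe s a / πb s a) * Rhat s a) + (πe s a / πb s a) * r s a ω) ^ 2) := by
      intro ω; simp only [pdef, Xdef]; ring
    rw [Finset.sum_congr rfl fun ω _ => h1 ω, ← Finset.mul_sum,
      moments_sq (P s a) (r s a) (hP1 s a) (Rbar s a) (σ2 s a) (hRbar s a) (hσ2 s a) _ _]
    ring
  -- the mixed-term identity per state
  have hm : ∀ s, (∑ a, πb s a * ((πe s a / πb s a) * (Rbar s a - Rhat s a)))
      = vπe s - ∑ a, πe s a * Rhat s a := by
    intro s
    have h1 : ∀ a, πb s a * ((πe s a / πb s a) * (Rbar s a - Rhat s a))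
        = πe s a * Rbar s a - πe s a * Rhat s a := by
      intro a
      linear_combination (Rbar s a - Rhat s a) * hbe s a
    rw [Finset.sum_congr rfl fun a _ => h1 a, Finset.sum_sub_distrib, hv s]
  have hstep : ∀ s, (∑ a, πb s a * (((∑ a', πe s a' * Rhat s a')
          + (πe s a / πb s a) * (Rbar s a - Rhat s a)) ^ 2
          + (πe s a / πb s a) ^ 2 * σ2 s a))
      = vπe s ^ 2
        + ((∑ a, πb s a * ((πe s a / πb s a) * (Rbar s a - Rhat s a)) ^ 2)
            - (∑ a, πb s a * ((πe s a / πb s a) * (Rbar s a - Rhat s a))) ^ 2)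
        + (∑ a, πb s a * (πe s a / πb s a) ^ 2 * σ2 s a) := by
    intro s
    have esplit : (∑ a, πb s a * (((∑ a', πe s a' * Rhat s a')
            + (πe s a / πb s a) * (Rbar s a - Rhat s a)) ^ 2
            + (πe s a / πb s a) ^ 2 * σ2 s a))
        = (∑ a', πe s a' * Rhat s a') ^ 2 * (∑ a, πb s a)
            + 2 * (∑ a', πe s a' * Rhat s a')
                * (∑ a, πb s a * ((πe s a / πb s a) * (Rbar s a - Rhat s a)))
            + (∑ a, πb s a * ((πe s a / πb s a) * (Rbar s a - Rhat s a)) ^ 2)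
            + (∑ a, πb s a * (πe s a / πb s a) ^ 2 * σ2 s a) := by
      conv_rhs => rw [Finset.mul_sum, Finset.mul_sum, ← Finset.sum_add_distrib,
        ← Finset.sum_add_distrib, ← Finset.sum_add_distrib]
      exact Finset.sum_congr rfl fun a _ => by ring
    rw [esplit, hπb1]
    linear_combination ((∑ a, πe s a * Rhat s a)
      + (∑ a, πb s a * ((πe s a / πb s a) * (Rbar s a - Rhat s a))) + vπe s) * hm s
  -- put everything together
  have E2 : (∑ f : Fin N → S × A × Ω, μ f * (V f) ^ 2)
      = ∑ f : Fin N → S × A × Ω, (∏ i, pdef d0 πb P (f i))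
          * ((N : ℝ)⁻¹ * ∑ i, Xdef πb πe Rhat r (f i)) ^ 2 := by
    refine Finset.sum_congr rfl fun f _ => ?_
    rw [hμ f, hV f]
    simp only [pdef, Xdef]
  have E1 : (∑ f : Fin N → S × A × Ω, μ f * V f)
      = ∑ f : Fin N → S × A × Ω, (∏ i, pdef d0 πb P (f i))
          * ((N : ℝ)⁻¹ * ∑ i, Xdef πb πe Rhat r (f i)) := by
    refine Finset.sum_congr rfl fun f _ => ?_
    rw [hμ f, hV f]
    simp only [pdef, Xdef]
  rw [E1, E2, iid_var hN (pdef d0 πb P) (Xdef πb πe Rhat r) hp1, hM1, hM2]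
  have hsum : (∑ s, d0 s * ∑ a, πb s a * (((∑ a', πe s a' * Rhat s a')
          + (πe s a / πb s a) * (Rbar s a - Rhat s a)) ^ 2
          + (πe s a / πb s a) ^ 2 * σ2 s a))
      = ∑ s, (d0 s * vπe s ^ 2
          + (d0 s * ((∑ a, πb s a * ((πe s a / πb s a) * (Rbar s a - Rhat s a)) ^ 2)
              - (∑ a, πb s a * ((πe s a / πb s a) * (Rbar s a - Rhat s a))) ^ 2)
            + d0 s * ∑ a, πb s a * (πe s a / πb s a) ^ 2 * σ2 s a)) := by
    refine Finset.sum_congr rfl fun s _ => ?_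
    rw [hstep s]
    ring
  rw [hsum, Finset.sum_add_distrib, Finset.sum_add_distrib]
  ring
end

section
/- Under biased annotations with common support of the augmented behavior policy, the IS⁺-augmented doubly robust estimators satisfy E[V̂^{DM-IS⁺}] = E[V̂^{DM⁺-IS⁺}] = v(π_e) + E_{s~d_0} E_{a~π_e(·|s)}[ (1 − W̄(a|s,a) π_b(a|s) / π_b⁺(a|s)) ε_G(s,a) ]. -/
open Finset

lemma sum_pi_eval {ι X : Type*} [Fintype ι] [DecidableEq ι] [Fintype X]
    (q : ι → X → ℝ) (hq : ∀ j, ∑ x, q j x = 1) (i : ι) (F : X → ℝ) :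
    ∑ f : ι → X, (∏ j, q j (f j)) * F (f i) = ∑ x, q i x * F x := by
  have h1 : ∀ f : ι → X, (∏ j, q j (f j)) * F (f i)
      = ∏ j, (q j (f j) * if j = i then F (f j) else 1) := by
    intro f
    rw [Finset.prod_mul_distrib, Finset.prod_ite_eq' Finset.univ i (fun j => F (f j))]
    simp
  simp only [h1]
  rw [← Fintype.piFinset_univ,
    Finset.sum_prod_piFinset Finset.univ (fun j x => q j x * if j = i then F x else 1)]
  rw [Finset.prod_eq_single i]
  · simp
  · intro j _ hj
    simp [hj, hq j]
  · simp

lemma sum_pi_one {ι X : Type*} [Fintype ι] [DecidableEq ι] [Fintype X]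
    (q : ι → X → ℝ) (hq : ∀ j, ∑ x, q j x = 1) :
    ∑ f : ι → X, (∏ j, q j (f j)) = 1 := by
  rw [← Fintype.piFinset_univ, Finset.sum_prod_piFinset Finset.univ (fun j x => q j x)]
  simp [hq]

lemma keyA {S A Ω Ωw Ωg : Type*} [Fintype S] [Fintype A] [DecidableEq A]
    [Fintype Ω] [Fintype Ωw] [Fintype Ωg]
    (d0 : S → ℝ) (πb πe : S → A → ℝ)
    (P r : S → A → Ω → ℝ)
    (qw : S → A → Ωw → ℝ) (w : S → A → Ωw → A → ℝ)
    (qg : S → A → Ωg → ℝ) (g : S → A → Ωg → ℝ)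
    (εG : S → A → ℝ) (Rm : S → A → ℝ)
    (hπb1 : ∀ s, ∑ a, πb s a = 1)
    (hπe0 : ∀ s a, 0 ≤ πe s a)
    (hP1 : ∀ s a, ∑ ω, P s a ω = 1)
    (hqw1 : ∀ s a, ∑ ωw, qw s a ωw = 1)
    (hqg1 : ∀ s a, ∑ ωg, qg s a ωg = 1)
    (Rbar : S → A → ℝ) (hRbar : ∀ s a, Rbar s a = ∑ ω, P s a ω * r s a ω)
    (hg : ∀ s a', ∑ ωg, qg s a' ωg * g s a' ωg = Rbar s a' + εG s a')
    (Wbar : S → A → A → ℝ)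
    (hWbar : ∀ s a a', Wbar s a a' = ∑ ωw, qw s a ωw * w s a ωw a')
    (πbp : S → A → ℝ) (hπbp : ∀ s a', πbp s a' = ∑ a, Wbar s a a' * πb s a)
    (hsupp : ∀ s a', 0 < πe s a' → 0 < πbp s a') :
    ∑ s, ∑ a, ∑ ω, ∑ ωw, ∑ h : A → Ωg,
      (d0 s * πb s a * P s a ω * qw s a ωw * ∏ a', qg s a' (h a')) *
        ((∑ a', πe s a' * Rm s a')
          + ∑ a', w s a ωw a' * (πe s a' / πbp s a') *
              ((if a' = a then r s a ω else g s a' (h a')) - Rm s a'))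
    = (∑ s, d0 s * ∑ a, πe s a * Rbar s a)
      + ∑ s, d0 s * ∑ a, πe s a *
          ((1 - Wbar s a a * πb s a / πbp s a) * εG s a) := by
  -- Step 1: integrate out the annotation noise h
  have hstep_h : ∀ s a (ω : Ω) (ωw : Ωw),
      ∑ h : A → Ωg, (∏ a', qg s a' (h a')) *
        ((∑ a', πe s a' * Rm s a')
          + ∑ a', w s a ωw a' * (πe s a' / πbp s a') *
              ((if a' = a then r s a ω else g s a' (h a')) - Rm s a'))
      = (∑ a', πe s a' * Rm s a')
          + ∑ a', w s a ωw a' * (πe s a' / πbp s a') *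
              ((if a' = a then r s a ω else Rbar s a' + εG s a') - Rm s a') := by
    intro s a ω ωw
    simp only [mul_add]
    rw [Finset.sum_add_distrib]
    congr 1
    · rw [← Finset.sum_mul, sum_pi_one (qg s) (hqg1 s), one_mul]
    · simp only [Finset.mul_sum]
      rw [Finset.sum_comm]
      refine Finset.sum_congr rfl fun a' _ => ?_
      by_cases hne : a' = a
      · simp only [if_pos hne]
        rw [← Finset.sum_mul, sum_pi_one (qg s) (hqg1 s), one_mul]
      · simp only [if_neg hne]
        have hterm : ∀ h : A → Ωg,
            (∏ a'', qg s a'' (h a'')) *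
              (w s a ωw a' * (πe s a' / πbp s a') * (g s a' (h a') - Rm s a'))
            = (w s a ωw a' * (πe s a' / πbp s a')) *
                ((∏ a'', qg s a'' (h a'')) * ((fun x => g s a' x - Rm s a') (h a'))) := by
          intro h; ring
        simp only [hterm]
        rw [← Finset.mul_sum, sum_pi_eval (qg s) (hqg1 s) a' (fun x => g s a' x - Rm s a')]
        have h2 : ∑ x, qg s a' x * (g s a' x - Rm s a') = (Rbar s a' + εG s a') - Rm s a' := by
          simp only [mul_sub]
          rw [Finset.sum_sub_distrib, hg, ← Finset.sum_mul, hqg1, one_mul]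
        rw [h2]
  -- Step 2: integrate out the weight noise
  have hstep_w : ∀ s a (ω : Ω),
      ∑ ωw, qw s a ωw * ((∑ a', πe s a' * Rm s a')
          + ∑ a', w s a ωw a' * (πe s a' / πbp s a') *
              ((if a' = a then r s a ω else Rbar s a' + εG s a') - Rm s a'))
      = (∑ a', πe s a' * Rm s a')
          + ∑ a', Wbar s a a' * (πe s a' / πbp s a') *
              ((if a' = a then r s a ω else Rbar s a' + εG s a') - Rm s a') := by
    intro s a ω
    simp only [mul_add]
    rw [Finset.sum_add_distrib]
    congr 1
    · rw [← Finset.sum_mul, hqw1, one_mul]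
    · simp only [Finset.mul_sum]
      rw [Finset.sum_comm]
      refine Finset.sum_congr rfl fun a' _ => ?_
      have hterm : ∀ ωw, qw s a ωw *
          (w s a ωw a' * (πe s a' / πbp s a') *
            ((if a' = a then r s a ω else Rbar s a' + εG s a') - Rm s a'))
          = (qw s a ωw * w s a ωw a') *
              ((πe s a' / πbp s a') *
                ((if a' = a then r s a ω else Rbar s a' + εG s a') - Rm s a')) := by
        intro ωw; ring
      simp only [hterm]
      rw [← Finset.sum_mul, ← hWbar]
      ring
  -- Step 3: integrate out the reward noise
  have hstep_ω : ∀ s a,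
      ∑ ω, P s a ω * ((∑ a', πe s a' * Rm s a')
          + ∑ a', Wbar s a a' * (πe s a' / πbp s a') *
              ((if a' = a then r s a ω else Rbar s a' + εG s a') - Rm s a'))
      = (∑ a', πe s a' * Rm s a')
          + ∑ a', Wbar s a a' * (πe s a' / πbp s a') *
              ((Rbar s a' + (if a' = a then 0 else εG s a')) - Rm s a') := by
    intro s a
    simp only [mul_add]
    rw [Finset.sum_add_distrib]
    congr 1
    · rw [← Finset.sum_mul, hP1, one_mul]
    · simp only [Finset.mul_sum]
      rw [Finset.sum_comm]
      refine Finset.sum_congr rfl fun a' _ => ?_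
      by_cases hne : a' = a
      · simp only [if_pos hne]
        subst hne
        have hterm : ∀ ω, P s a' ω *
            (Wbar s a' a' * (πe s a' / πbp s a') * (r s a' ω - Rm s a'))
            = (Wbar s a' a' * (πe s a' / πbp s a')) * (P s a' ω * r s a' ω)
              - (Wbar s a' a' * (πe s a' / πbp s a') * Rm s a') * P s a' ω := by
          intro ω; ring
        simp only [hterm]
        rw [Finset.sum_sub_distrib, ← Finset.mul_sum, ← hRbar, ← Finset.mul_sum, hP1, mul_one]
        ring
      · simp only [if_neg hne]
        rw [← Finset.sum_mul, hP1, one_mul]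
  -- Step 4: average over factual actions
  have hstep_a : ∀ s,
      ∑ a, πb s a * ((∑ a', πe s a' * Rm s a')
          + ∑ a', Wbar s a a' * (πe s a' / πbp s a') *
              ((Rbar s a' + (if a' = a then 0 else εG s a')) - Rm s a'))
      = (∑ a, πe s a * Rbar s a)
          + ∑ a, πe s a * ((1 - Wbar s a a * πb s a / πbp s a) * εG s a) := by
    intro s
    have hpoint : ∀ a' : A,
        ∑ a, πb s a * (Wbar s a a' * (πe s a' / πbp s a') *
            ((Rbar s a' + (if a' = a then 0 else εG s a')) - Rm s a'))
        = πe s a' * ((Rbar s a' + εG s a') - Rm s a')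
            - πe s a' * (Wbar s a' a' * πb s a' / πbp s a') * εG s a' := by
      intro a'
      by_cases hz : πe s a' = 0
      · simp [hz]
      · have hpos : 0 < πbp s a' :=
          hsupp s a' (lt_of_le_of_ne (hπe0 s a') (Ne.symm hz))
        have hne0 : πbp s a' ≠ 0 := ne_of_gt hpos
        have expand : ∀ a, πb s a * (Wbar s a a' * (πe s a' / πbp s a') *
              ((Rbar s a' + (if a' = a then 0 else εG s a')) - Rm s a'))
            = (Wbar s a a' * πb s a) *
                ((πe s a' / πbp s a') * ((Rbar s a' + εG s a') - Rm s a'))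
              - (if a' = a then
                  πb s a * Wbar s a a' * (πe s a' / πbp s a') * εG s a' else 0) := by
          intro a
          by_cases h : a' = a
          · simp only [if_pos h]; ring
          · simp only [if_neg h]; ring
        simp only [expand]
        rw [Finset.sum_sub_distrib, ← Finset.sum_mul, ← hπbp,
          Finset.sum_ite_eq Finset.univ a'
            (fun a => πb s a * Wbar s a a' * (πe s a' / πbp s a') * εG s a')]
        simp only [Finset.mem_univ, if_true]
        have h3 : πe s a' / πbp s a' * πbp s a' = πe s a' := div_mul_cancel₀ _ hne0
        linear_combination (Rbar s a' + εG s a' - Rm s a') * h3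
    simp only [mul_add]
    rw [Finset.sum_add_distrib, ← Finset.sum_mul, hπb1, one_mul]
    simp only [Finset.mul_sum]
    rw [Finset.sum_comm]
    simp only [hpoint]
    rw [Finset.sum_sub_distrib]
    have hid : ∀ a', πe s a' * ((Rbar s a' + εG s a') - Rm s a')
        = (πe s a' * Rbar s a' - πe s a' * Rm s a') + πe s a' * εG s a' := by
      intro a'; ring
    simp only [hid]
    rw [Finset.sum_add_distrib, Finset.sum_sub_distrib]
    have hid2 : ∀ a, πe s a * ((1 - Wbar s a a * πb s a / πbp s a) * εG s a)
        = πe s a * εG s a - πe s a * (Wbar s a a * πb s a / πbp s a) * εG s a := by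
      intro a; ring
    simp only [hid2]
    rw [Finset.sum_sub_distrib]
    ring
  -- Assemble
  calc ∑ s, ∑ a, ∑ ω, ∑ ωw, ∑ h : A → Ωg,
      (d0 s * πb s a * P s a ω * qw s a ωw * ∏ a', qg s a' (h a')) *
        ((∑ a', πe s a' * Rm s a')
          + ∑ a', w s a ωw a' * (πe s a' / πbp s a') *
              ((if a' = a then r s a ω else g s a' (h a')) - Rm s a'))
      = ∑ s, d0 s * ∑ a, πb s a * ∑ ω, P s a ω * ∑ ωw, qw s a ωw *
          ∑ h : A → Ωg, (∏ a', qg s a' (h a')) *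
            ((∑ a', πe s a' * Rm s a')
              + ∑ a', w s a ωw a' * (πe s a' / πbp s a') *
                  ((if a' = a then r s a ω else g s a' (h a')) - Rm s a')) := by
        simp only [Finset.mul_sum]
        refine Finset.sum_congr rfl fun s _ => Finset.sum_congr rfl fun a _ =>
          Finset.sum_congr rfl fun ω _ => Finset.sum_congr rfl fun ωw _ =>
          Finset.sum_congr rfl fun h _ => ?_
        ring
    _ = ∑ s, d0 s * ∑ a, πb s a * ((∑ a', πe s a' * Rm s a')
          + ∑ a', Wbar s a a' * (πe s a' / πbp s a') *
              ((Rbar s a' + (if a' = a then 0 else εG s a')) - Rm s a')) := by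
        refine Finset.sum_congr rfl fun s _ => ?_
        congr 1
        refine Finset.sum_congr rfl fun a _ => ?_
        congr 1
        rw [← hstep_ω s a]
        refine Finset.sum_congr rfl fun ω _ => ?_
        congr 1
        rw [← hstep_w s a ω]
        refine Finset.sum_congr rfl fun ωw _ => ?_
        congr 1
        exact hstep_h s a ω ωw
    _ = ∑ s, d0 s * ((∑ a, πe s a * Rbar s a)
          + ∑ a, πe s a * ((1 - Wbar s a a * πb s a / πbp s a) * εG s a)) := by
        refine Finset.sum_congr rfl fun s _ => ?_
        rw [hstep_a s]
    _ = (∑ s, d0 s * ∑ a, πe s a * Rbar s a)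
          + ∑ s, d0 s * ∑ a, πe s a *
              ((1 - Wbar s a a * πb s a / πbp s a) * εG s a) := by
        simp only [mul_add]
        rw [Finset.sum_add_distrib]

lemma iid_avg {X : Type*} [Fintype X] (μ F : X → ℝ) (hμ1 : ∑ x, μ x = 1)
    (N : ℕ) (hN : 0 < N) :
    ∑ f : Fin N → X, (∏ i, μ (f i)) * ((N : ℝ)⁻¹ * ∑ i, F (f i))
      = ∑ x, μ x * F x := by
  have key : ∀ i : Fin N, ∑ f : Fin N → X, (∏ j, μ (f j)) * F (f i) = ∑ x, μ x * F x :=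
    fun i => sum_pi_eval (fun _ => μ) (fun _ => hμ1) i F
  calc ∑ f : Fin N → X, (∏ i, μ (f i)) * ((N : ℝ)⁻¹ * ∑ i, F (f i))
      = (N : ℝ)⁻¹ * ∑ i : Fin N, ∑ f : Fin N → X, (∏ j, μ (f j)) * F (f i) := by
        simp only [Finset.mul_sum]
        rw [Finset.sum_comm]
        refine Finset.sum_congr rfl fun i _ => Finset.sum_congr rfl fun f _ => ?_
        ring
    _ = ∑ x, μ x * F x := by
        simp only [key, Finset.sum_const, Finset.card_univ, Fintype.card_fin, nsmul_eq_mul]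
        rw [← mul_assoc, inv_mul_cancel₀ (by exact_mod_cast hN.ne'), one_mul]



/-- **Expectation of DM-IS⁺ and DM⁺-IS⁺ under biased annotations.**
Each i.i.d. evaluation sample consists of a context `s ~ d0`, factual action
`a ~ πb(·|s)`, reward noise `ω ~ P s a` (reward value `r s a ω`, mean `Rbar`),
weight noise `ωw ~ qw s a` giving the weight vector `w s a ωw : A → ℝ` summing to 1
(independent of rewards/annotations given `(s,a)`), and annotation noises
`h a' ~ qg s a'` giving annotations `g s a' (h a')` with mean `Rbar s a' + εG s a'`.
`Wbar a' s a = E[w^{a'}]`, `πbp a' s = Σ_a Wbar(a'|s,a) πb(a|s)` is the augmented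
behavior policy, with common support `πe(a|s) > 0 → πbp(a|s) > 0`. The counterfactual
value is `c^{a'} = r` if `a' = a` else the annotation. With a fixed reward model
`Rhat` (DM-IS⁺) or one fitted on an independent dataset (`Rhatp θ`, `θ ~ pΘ`;
DM⁺-IS⁺), both estimators have expectation
`v(πe) + E_{s~d0} E_{a~πe}[(1 − Wbar(a|s,a)·πb(a|s)/πbp(a|s))·εG(s,a)]`. -/
theorem dm_is_plus_and_dm_plus_is_plus_expectation_biased
    {S A Ω Ωw Ωg Θ : Type*} [Fintype S] [Fintype A] [DecidableEq A]
    [Fintype Ω] [Fintype Ωw] [Fintype Ωg] [Fintype Θ]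
    (d0 : S → ℝ) (πb πe : S → A → ℝ)
    (P : S → A → Ω → ℝ) (r : S → A → Ω → ℝ)
    (qw : S → A → Ωw → ℝ) (w : S → A → Ωw → A → ℝ)
    (qg : S → A → Ωg → ℝ) (g : S → A → Ωg → ℝ)
    (εG : S → A → ℝ)
    (Rhat : S → A → ℝ) (pΘ : Θ → ℝ) (Rhatp : Θ → S → A → ℝ)
    (hd00 : ∀ s, 0 ≤ d0 s) (hd01 : ∑ s, d0 s = 1)
    (hπb0 : ∀ s a, 0 ≤ πb s a) (hπb1 : ∀ s, ∑ a, πb s a = 1)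
    (hπe0 : ∀ s a, 0 ≤ πe s a) (hπe1 : ∀ s, ∑ a, πe s a = 1)
    (hP0 : ∀ s a ω, 0 ≤ P s a ω) (hP1 : ∀ s a, ∑ ω, P s a ω = 1)
    (hqw0 : ∀ s a ωw, 0 ≤ qw s a ωw) (hqw1 : ∀ s a, ∑ ωw, qw s a ωw = 1)
    (hw0 : ∀ s a ωw a', 0 ≤ w s a ωw a') (hw1 : ∀ s a ωw, ∑ a', w s a ωw a' = 1)
    (hqg0 : ∀ s a ωg, 0 ≤ qg s a ωg) (hqg1 : ∀ s a, ∑ ωg, qg s a ωg = 1)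
    (hpΘ0 : ∀ θ, 0 ≤ pΘ θ) (hpΘ1 : ∑ θ, pΘ θ = 1)
    (Rbar : S → A → ℝ) (hRbar : ∀ s a, Rbar s a = ∑ ω, P s a ω * r s a ω)
    (hg : ∀ s a', ∑ ωg, qg s a' ωg * g s a' ωg = Rbar s a' + εG s a')
    (Wbar : S → A → A → ℝ)
    (hWbar : ∀ s a a', Wbar s a a' = ∑ ωw, qw s a ωw * w s a ωw a')
    (πbp : S → A → ℝ)
    (hπbp : ∀ s a', πbp s a' = ∑ a, Wbar s a a' * πb s a)
    (hsupp : ∀ s a', 0 < πe s a' → 0 < πbp s a')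
    (N : ℕ) (hN : 0 < N)
    (μ : S × A × Ω × Ωw × (A → Ωg) → ℝ)
    (hμ : ∀ s a ω ωw h, μ (s, a, ω, ωw, h)
        = d0 s * πb s a * P s a ω * qw s a ωw * ∏ a', qg s a' (h a'))
    (est : (S → A → ℝ) → S × A × Ω × Ωw × (A → Ωg) → ℝ)
    (hest : ∀ Rm s a ω ωw h, est Rm (s, a, ω, ωw, h)
        = (∑ a', πe s a' * Rm s a')
          + ∑ a', w s a ωw a' * (πe s a' / πbp s a') *
              ((if a' = a then r s a ω else g s a' (h a')) - Rm s a')) :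
    (∑ f : Fin N → S × A × Ω × Ωw × (A → Ωg),
          (∏ i, μ (f i)) * ((N : ℝ)⁻¹ * ∑ i, est Rhat (f i))
        = (∑ s, d0 s * ∑ a, πe s a * Rbar s a)
          + ∑ s, d0 s * ∑ a, πe s a *
              ((1 - Wbar s a a * πb s a / πbp s a) * εG s a)) ∧
    (∑ θ, pΘ θ * ∑ f : Fin N → S × A × Ω × Ωw × (A → Ωg),
          (∏ i, μ (f i)) * ((N : ℝ)⁻¹ * ∑ i, est (Rhatp θ) (f i))
        = (∑ s, d0 s * ∑ a, πe s a * Rbar s a)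
          + ∑ s, d0 s * ∑ a, πe s a *
              ((1 - Wbar s a a * πb s a / πbp s a) * εG s a)) := by
  have hpi : ∀ s, ∑ h : A → Ωg, ∏ a', qg s a' (h a') = 1 :=
    fun s => sum_pi_one (qg s) (hqg1 s)
  have hμ1 : ∑ x : S × A × Ω × Ωw × (A → Ωg), μ x = 1 := by
    simp only [Fintype.sum_prod_type, hμ]
    calc ∑ s, ∑ a, ∑ ω, ∑ ωw, ∑ h : A → Ωg,
        d0 s * πb s a * P s a ω * qw s a ωw * ∏ a', qg s a' (h a')
        = ∑ s, d0 s * ∑ a, πb s a * ∑ ω, P s a ω * ∑ ωw, qw s a ωw *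
            ∑ h : A → Ωg, ∏ a', qg s a' (h a') := by
          simp only [Finset.mul_sum]
          refine Finset.sum_congr rfl fun s _ => Finset.sum_congr rfl fun a _ =>
            Finset.sum_congr rfl fun ω _ => Finset.sum_congr rfl fun ωw _ =>
            Finset.sum_congr rfl fun h _ => ?_
          ring
      _ = 1 := by
          simp only [hpi, mul_one, hqw1, hP1, hπb1]
          exact hd01
  have hEst : ∀ Rm : S → A → ℝ,
      ∑ x : S × A × Ω × Ωw × (A → Ωg), μ x * est Rm x
      = (∑ s, d0 s * ∑ a, πe s a * Rbar s a)
        + ∑ s, d0 s * ∑ a, πe s a *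
            ((1 - Wbar s a a * πb s a / πbp s a) * εG s a) := by
    intro Rm
    have hsplit : ∑ x : S × A × Ω × Ωw × (A → Ωg), μ x * est Rm x
        = ∑ s, ∑ a, ∑ ω, ∑ ωw, ∑ h : A → Ωg,
          (d0 s * πb s a * P s a ω * qw s a ωw * ∏ a', qg s a' (h a')) *
            ((∑ a', πe s a' * Rm s a')
              + ∑ a', w s a ωw a' * (πe s a' / πbp s a') *
                  ((if a' = a then r s a ω else g s a' (h a')) - Rm s a')) := by
      simp only [Fintype.sum_prod_type, hμ, hest]
    rw [hsplit]
    exact keyA d0 πb πe P r qw w qg g εG Rm hπb1 hπe0 hP1 hqw1 hqg1 Rbar hRbar hg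
      Wbar hWbar πbp hπbp hsupp
  constructor
  · rw [iid_avg μ (est Rhat) hμ1 N hN]
    exact hEst Rhat
  · have hθ : ∀ θ, ∑ f : Fin N → S × A × Ω × Ωw × (A → Ωg),
        (∏ i, μ (f i)) * ((N : ℝ)⁻¹ * ∑ i, est (Rhatp θ) (f i))
        = (∑ s, d0 s * ∑ a, πe s a * Rbar s a)
          + ∑ s, d0 s * ∑ a, πe s a *
              ((1 - Wbar s a a * πb s a / πbp s a) * εG s a) := by
      intro θ
      rw [iid_avg μ (est (Rhatp θ)) hμ1 N hN]
      exact hEst (Rhatp θ)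
    simp only [hθ]
    rw [← Finset.sum_mul, hpΘ1, one_mul]
end

section
/- Under perfect annotations (annotation mean equal to R̄(s,a)) and common support of π_b⁺, the estimator V̂^{DM-IS⁺} is unbiased: E[V̂^{DM-IS⁺}] = v(π_e). -/
open Finset

/-- Sum over functions of a product with a single-site observable. -/
lemma site_lemma {ι κ : Type*} [Fintype ι] [DecidableEq ι] [Fintype κ]
    (f : ι → κ → ℝ) (j : ι) (φ : κ → ℝ) (hone : ∀ i, i ≠ j → ∑ k, f i k = 1) :
    ∑ h : ι → κ, (∏ i, f i (h i)) * φ (h j) = ∑ k, f j k * φ k := by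
  have h1 : ∀ h : ι → κ, (∏ i, f i (h i)) * φ (h j)
      = ∏ i, (f i (h i) * if i = j then φ (h i) else 1) := by
    intro h
    rw [Finset.prod_mul_distrib]
    congr 1
    simp
  calc ∑ h : ι → κ, (∏ i, f i (h i)) * φ (h j)
      = ∑ h : ι → κ, ∏ i, (f i (h i) * if i = j then φ (h i) else 1) :=
        Finset.sum_congr rfl fun h _ => h1 h
    _ = ∏ i, ∑ k, (f i k * if i = j then φ k else 1) := by
        rw [Fintype.prod_sum (fun i k => f i k * if i = j then φ k else 1)]
    _ = ∑ k, f j k * φ k := by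
        rw [Finset.prod_eq_single j]
        · simp
        · intro b _ hb
          simp [hb, hone b hb]
        · simp

lemma sum3_factor {α β γ : Type*} [Fintype α] [Fintype β] [Fintype γ]
    (f : α → ℝ) (g : β → ℝ) (k : γ → ℝ) :
    ∑ a, ∑ b, ∑ c, f a * g b * k c = (∑ a, f a) * (∑ b, g b) * (∑ c, k c) := by
  rw [Finset.sum_mul_sum, Finset.sum_mul]
  refine Finset.sum_congr rfl fun a _ => ?_
  rw [Finset.sum_mul]
  refine Finset.sum_congr rfl fun b _ => ?_
  rw [Finset.mul_sum]

lemma sum_comm4 {α β γ δ : Type*} [Fintype α] [Fintype β] [Fintype γ] [Fintype δ]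
    (F : α → β → γ → δ → ℝ) :
    ∑ a, ∑ b, ∑ c, ∑ d, F a b c d = ∑ d, ∑ a, ∑ b, ∑ c, F a b c d := by
  calc ∑ a, ∑ b, ∑ c, ∑ d, F a b c d
      = ∑ a, ∑ b, ∑ d, ∑ c, F a b c d :=
        Finset.sum_congr rfl fun a _ => Finset.sum_congr rfl fun b _ => Finset.sum_comm
    _ = ∑ a, ∑ d, ∑ b, ∑ c, F a b c d :=
        Finset.sum_congr rfl fun a _ => Finset.sum_comm
    _ = ∑ d, ∑ a, ∑ b, ∑ c, F a b c d := Finset.sum_comm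

/-- **Unbiasedness of DM-IS⁺ under perfect annotations.**
Same sampling model as the biased-annotation expectation theorem for DM-IS⁺, but with
annotation mean equal to `Rbar s a'` (i.e. `ε_G ≡ 0`): under common support of the
augmented behavior policy `πbp`, the estimator
`V̂^{DM-IS⁺} = (1/N) Σ_i [Σ_a πe(a|s_i) Rhat(s_i,a)
  + Σ_a w_i^a (πe(a|s_i)/πbp(a|s_i))(c_i^a − Rhat(s_i,a))]`
is unbiased: `E[V̂^{DM-IS⁺}] = v(π_e)`. -/
theorem dm_is_plus_unbiased_perfect
    {S A Ω Ωw Ωg : Type*} [Fintype S] [Fintype A] [DecidableEq A]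
    [Fintype Ω] [Fintype Ωw] [Fintype Ωg]
    (d0 : S → ℝ) (πb πe : S → A → ℝ)
    (P : S → A → Ω → ℝ) (r : S → A → Ω → ℝ)
    (qw : S → A → Ωw → ℝ) (w : S → A → Ωw → A → ℝ)
    (qg : S → A → Ωg → ℝ) (g : S → A → Ωg → ℝ)
    (Rhat : S → A → ℝ)
    (hd00 : ∀ s, 0 ≤ d0 s) (hd01 : ∑ s, d0 s = 1)
    (hπb0 : ∀ s a, 0 ≤ πb s a) (hπb1 : ∀ s, ∑ a, πb s a = 1)
    (hπe0 : ∀ s a, 0 ≤ πe s a) (hπe1 : ∀ s, ∑ a, πe s a = 1)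
    (hP0 : ∀ s a ω, 0 ≤ P s a ω) (hP1 : ∀ s a, ∑ ω, P s a ω = 1)
    (hqw0 : ∀ s a ωw, 0 ≤ qw s a ωw) (hqw1 : ∀ s a, ∑ ωw, qw s a ωw = 1)
    (hw0 : ∀ s a ωw a', 0 ≤ w s a ωw a') (hw1 : ∀ s a ωw, ∑ a', w s a ωw a' = 1)
    (hqg0 : ∀ s a ωg, 0 ≤ qg s a ωg) (hqg1 : ∀ s a, ∑ ωg, qg s a ωg = 1)
    (Rbar : S → A → ℝ) (hRbar : ∀ s a, Rbar s a = ∑ ω, P s a ω * r s a ω)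
    (hg : ∀ s a', ∑ ωg, qg s a' ωg * g s a' ωg = Rbar s a')
    (Wbar : S → A → A → ℝ)
    (hWbar : ∀ s a a', Wbar s a a' = ∑ ωw, qw s a ωw * w s a ωw a')
    (πbp : S → A → ℝ)
    (hπbp : ∀ s a', πbp s a' = ∑ a, Wbar s a a' * πb s a)
    (hsupp : ∀ s a', 0 < πe s a' → 0 < πbp s a')
    (N : ℕ) (hN : 0 < N)
    (μ : S × A × Ω × Ωw × (A → Ωg) → ℝ)
    (hμ : ∀ s a ω ωw h, μ (s, a, ω, ωw, h)
        = d0 s * πb s a * P s a ω * qw s a ωw * ∏ a', qg s a' (h a'))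
    (est : S × A × Ω × Ωw × (A → Ωg) → ℝ)
    (hest : ∀ s a ω ωw h, est (s, a, ω, ωw, h)
        = (∑ a', πe s a' * Rhat s a')
          + ∑ a', w s a ωw a' * (πe s a' / πbp s a') *
              ((if a' = a then r s a ω else g s a' (h a')) - Rhat s a')) :
    ∑ f : Fin N → S × A × Ω × Ωw × (A → Ωg),
        (∏ i, μ (f i)) * ((N : ℝ)⁻¹ * ∑ i, est (f i))
      = ∑ s, d0 s * ∑ a, πe s a * Rbar s a := by
  classical
  -- mass of the annotation-noise product measure
  have hT1 : ∀ s, ∑ h : A → Ωg, ∏ a', qg s a' (h a') = 1 := by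
    intro s
    rw [← Fintype.prod_sum (fun a' ωg => qg s a' ωg)]
    simp [hqg1]
  have hTg : ∀ s a', ∑ h : A → Ωg, (∏ a'', qg s a'' (h a'')) * g s a' (h a') = Rbar s a' := by
    intro s a'
    rw [site_lemma (fun a'' ωg => qg s a'' ωg) a' (g s a') (fun i _ => hqg1 s i), hg]
  have base : ∀ s a, (∑ ω, ∑ ωw, ∑ h : A → Ωg,
      P s a ω * qw s a ωw * (∏ a'', qg s a'' (h a''))) = 1 := by
    intro s a
    rw [sum3_factor, hP1, hqw1, hT1]
    ring
  -- inner expectation of the correction term, per (s, a, a')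
  have hinner : ∀ s a a',
      (∑ ω, ∑ ωw, ∑ h : A → Ωg, P s a ω * qw s a ωw * (∏ a'', qg s a'' (h a'')) *
        (w s a ωw a' * (πe s a' / πbp s a') *
          ((if a' = a then r s a ω else g s a' (h a')) - Rhat s a')))
      = Wbar s a a' * (πe s a' / πbp s a') * (Rbar s a' - Rhat s a') := by
    intro s a a'
    by_cases hcase : a' = a
    · subst hcase
      calc (∑ ω, ∑ ωw, ∑ h : A → Ωg, P s a' ω * qw s a' ωw * (∏ a'', qg s a'' (h a'')) *
            (w s a' ωw a' * (πe s a' / πbp s a') *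
              ((if a' = a' then r s a' ω else g s a' (h a')) - Rhat s a')))
          = ∑ ω, ∑ ωw, ∑ h : A → Ωg,
              (P s a' ω * ((πe s a' / πbp s a') * (r s a' ω - Rhat s a'))) *
              (qw s a' ωw * w s a' ωw a') * (∏ a'', qg s a'' (h a'')) := by
            refine Finset.sum_congr rfl fun ω _ => Finset.sum_congr rfl fun ωw _ =>
              Finset.sum_congr rfl fun h _ => ?_
            rw [if_pos rfl]; ring
        _ = (∑ ω, P s a' ω * ((πe s a' / πbp s a') * (r s a' ω - Rhat s a'))) *
            (∑ ωw, qw s a' ωw * w s a' ωw a') * (∑ h : A → Ωg, ∏ a'', qg s a'' (h a'')) :=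
            sum3_factor _ _ _
        _ = Wbar s a' a' * (πe s a' / πbp s a') * (Rbar s a' - Rhat s a') := by
            rw [hT1, ← hWbar]
            have : ∑ ω, P s a' ω * ((πe s a' / πbp s a') * (r s a' ω - Rhat s a'))
                = (πe s a' / πbp s a') * (Rbar s a' - Rhat s a') := by
              calc ∑ ω, P s a' ω * ((πe s a' / πbp s a') * (r s a' ω - Rhat s a'))
                  = ∑ ω, ((πe s a' / πbp s a') * (P s a' ω * r s a' ω)
                      - (πe s a' / πbp s a') * Rhat s a' * P s a' ω) :=
                    Finset.sum_congr rfl fun ω _ => by ring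
                _ = (πe s a' / πbp s a') * (∑ ω, P s a' ω * r s a' ω)
                      - (πe s a' / πbp s a') * Rhat s a' * (∑ ω, P s a' ω) := by
                    rw [Finset.sum_sub_distrib, ← Finset.mul_sum, ← Finset.mul_sum]
                _ = (πe s a' / πbp s a') * (Rbar s a' - Rhat s a') := by
                    rw [hP1, hRbar]; ring
            rw [this]; ring
    · calc (∑ ω, ∑ ωw, ∑ h : A → Ωg, P s a ω * qw s a ωw * (∏ a'', qg s a'' (h a'')) *
            (w s a ωw a' * (πe s a' / πbp s a') *
              ((if a' = a then r s a ω else g s a' (h a')) - Rhat s a')))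
          = ∑ ω, ∑ ωw, ∑ h : A → Ωg,
              (P s a ω) * (qw s a ωw * w s a ωw a') *
              ((∏ a'', qg s a'' (h a'')) * ((πe s a' / πbp s a') * (g s a' (h a') - Rhat s a'))) := by
            refine Finset.sum_congr rfl fun ω _ => Finset.sum_congr rfl fun ωw _ =>
              Finset.sum_congr rfl fun h _ => ?_
            rw [if_neg hcase]; ring
        _ = (∑ ω, P s a ω) * (∑ ωw, qw s a ωw * w s a ωw a') *
            (∑ h : A → Ωg, (∏ a'', qg s a'' (h a'')) *
              ((πe s a' / πbp s a') * (g s a' (h a') - Rhat s a'))) := sum3_factor _ _ _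
        _ = Wbar s a a' * (πe s a' / πbp s a') * (Rbar s a' - Rhat s a') := by
            rw [hP1, ← hWbar]
            have : (∑ h : A → Ωg, (∏ a'', qg s a'' (h a'')) *
                ((πe s a' / πbp s a') * (g s a' (h a') - Rhat s a')))
                = (πe s a' / πbp s a') * (Rbar s a' - Rhat s a') := by
              calc (∑ h : A → Ωg, (∏ a'', qg s a'' (h a'')) *
                  ((πe s a' / πbp s a') * (g s a' (h a') - Rhat s a')))
                  = ∑ h : A → Ωg,
                      ((πe s a' / πbp s a') * ((∏ a'', qg s a'' (h a'')) * g s a' (h a'))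
                       - (πe s a' / πbp s a') * Rhat s a' * (∏ a'', qg s a'' (h a''))) :=
                    Finset.sum_congr rfl fun h _ => by ring
                _ = (πe s a' / πbp s a')
                      * (∑ h : A → Ωg, (∏ a'', qg s a'' (h a'')) * g s a' (h a'))
                    - (πe s a' / πbp s a') * Rhat s a'
                      * (∑ h : A → Ωg, ∏ a'', qg s a'' (h a'')) := by
                    rw [Finset.sum_sub_distrib, ← Finset.mul_sum, ← Finset.mul_sum]
                _ = (πe s a' / πbp s a') * (Rbar s a' - Rhat s a') := by
                    rw [hTg, hT1]; ring
            rw [this]; ring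
  -- conditional expectation of the estimator given (s, a)
  have hsa : ∀ s a, (∑ ω, ∑ ωw, ∑ h : A → Ωg,
      P s a ω * qw s a ωw * (∏ a'', qg s a'' (h a'')) * est (s, a, ω, ωw, h))
      = (∑ a', πe s a' * Rhat s a')
        + ∑ a', Wbar s a a' * (πe s a' / πbp s a') * (Rbar s a' - Rhat s a') := by
    intro s a
    calc (∑ ω, ∑ ωw, ∑ h : A → Ωg,
        P s a ω * qw s a ωw * (∏ a'', qg s a'' (h a'')) * est (s, a, ω, ωw, h))
        = ∑ ω, ∑ ωw, ∑ h : A → Ωg,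
            (P s a ω * qw s a ωw * (∏ a'', qg s a'' (h a'')) * (∑ a', πe s a' * Rhat s a')
             + ∑ a', P s a ω * qw s a ωw * (∏ a'', qg s a'' (h a'')) *
                 (w s a ωw a' * (πe s a' / πbp s a') *
                   ((if a' = a then r s a ω else g s a' (h a')) - Rhat s a'))) := by
          refine Finset.sum_congr rfl fun ω _ => Finset.sum_congr rfl fun ωw _ =>
            Finset.sum_congr rfl fun h _ => ?_
          rw [hest, mul_add]
          congr 1
          rw [Finset.mul_sum]
      _ = (∑ ω, ∑ ωw, ∑ h : A → Ωg,
            P s a ω * qw s a ωw * (∏ a'', qg s a'' (h a'')) * (∑ a', πe s a' * Rhat s a'))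
          + ∑ ω, ∑ ωw, ∑ h : A → Ωg, ∑ a',
              P s a ω * qw s a ωw * (∏ a'', qg s a'' (h a'')) *
                (w s a ωw a' * (πe s a' / πbp s a') *
                  ((if a' = a then r s a ω else g s a' (h a')) - Rhat s a')) := by
          simp only [Finset.sum_add_distrib]
      _ = (∑ a', πe s a' * Rhat s a')
          + ∑ a', Wbar s a a' * (πe s a' / πbp s a') * (Rbar s a' - Rhat s a') := by
          congr 1
          · simp only [← Finset.sum_mul]
            rw [base s a, one_mul]
          · rw [sum_comm4]
            exact Finset.sum_congr rfl fun a' _ => hinner s a a'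
  -- total mass of μ is one
  have hmass : ∑ z : S × A × Ω × Ωw × (A → Ωg), μ z = 1 := by
    simp only [Fintype.sum_prod_type, hμ]
    calc (∑ s, ∑ a, ∑ ω, ∑ ωw, ∑ h : A → Ωg,
        d0 s * πb s a * P s a ω * qw s a ωw * ∏ a', qg s a' (h a'))
        = ∑ s, ∑ a, d0 s * πb s a * (∑ ω, ∑ ωw, ∑ h : A → Ωg,
            P s a ω * qw s a ωw * (∏ a'', qg s a'' (h a''))) := by
          refine Finset.sum_congr rfl fun s _ => Finset.sum_congr rfl fun a _ => ?_
          simp only [Finset.mul_sum]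
          refine Finset.sum_congr rfl fun ω _ => Finset.sum_congr rfl fun ωw _ =>
            Finset.sum_congr rfl fun h _ => by ring
      _ = ∑ s, ∑ a, d0 s * πb s a := by
          simp only [base, mul_one]
      _ = 1 := by
          simp only [← Finset.mul_sum, hπb1, mul_one, hd01]
  -- single-sample expectation of the estimator
  have hE : ∑ z : S × A × Ω × Ωw × (A → Ωg), μ z * est z
      = ∑ s, d0 s * ∑ a, πe s a * Rbar s a := by
    calc ∑ z : S × A × Ω × Ωw × (A → Ωg), μ z * est z
        = ∑ s, ∑ a, d0 s * πb s a * (∑ ω, ∑ ωw, ∑ h : A → Ωg,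
            P s a ω * qw s a ωw * (∏ a'', qg s a'' (h a'')) * est (s, a, ω, ωw, h)) := by
          simp only [Fintype.sum_prod_type, hμ]
          refine Finset.sum_congr rfl fun s _ => Finset.sum_congr rfl fun a _ => ?_
          simp only [Finset.mul_sum]
          refine Finset.sum_congr rfl fun ω _ => Finset.sum_congr rfl fun ωw _ =>
            Finset.sum_congr rfl fun h _ => by ring
      _ = ∑ s, ∑ a, d0 s * πb s a * ((∑ a', πe s a' * Rhat s a')
            + ∑ a', Wbar s a a' * (πe s a' / πbp s a') * (Rbar s a' - Rhat s a')) := by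
          refine Finset.sum_congr rfl fun s _ => Finset.sum_congr rfl fun a _ => ?_
          rw [hsa s a]
      _ = ∑ s, d0 s * ((∑ a', πe s a' * Rhat s a')
            + ∑ a', πbp s a' * (πe s a' / πbp s a') * (Rbar s a' - Rhat s a')) := by
          refine Finset.sum_congr rfl fun s _ => ?_
          calc (∑ a, d0 s * πb s a * ((∑ a', πe s a' * Rhat s a')
              + ∑ a', Wbar s a a' * (πe s a' / πbp s a') * (Rbar s a' - Rhat s a')))
              = ∑ a, (d0 s * πb s a * (∑ a', πe s a' * Rhat s a')
                + d0 s * ∑ a', πb s a * (Wbar s a a' * (πe s a' / πbp s a') * (Rbar s a' - Rhat s a'))) := by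
                refine Finset.sum_congr rfl fun a _ => ?_
                simp only [mul_add, Finset.mul_sum]
                congr 1
                exact Finset.sum_congr rfl fun a' _ => by ring
            _ = (∑ a, d0 s * πb s a * (∑ a', πe s a' * Rhat s a'))
                + d0 s * ∑ a, ∑ a', πb s a * (Wbar s a a' * (πe s a' / πbp s a') * (Rbar s a' - Rhat s a')) := by
                rw [Finset.sum_add_distrib, Finset.mul_sum]
            _ = d0 s * (∑ a', πe s a' * Rhat s a')
                + d0 s * ∑ a', πbp s a' * (πe s a' / πbp s a') * (Rbar s a' - Rhat s a') := by
                congr 1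
                · rw [← Finset.sum_mul, ← Finset.mul_sum, hπb1, mul_one]
                · congr 1
                  rw [Finset.sum_comm]
                  refine Finset.sum_congr rfl fun a' _ => ?_
                  calc (∑ a, πb s a * (Wbar s a a' * (πe s a' / πbp s a') * (Rbar s a' - Rhat s a')))
                      = (∑ a, Wbar s a a' * πb s a) * ((πe s a' / πbp s a') * (Rbar s a' - Rhat s a')) := by
                        rw [Finset.sum_mul]
                        exact Finset.sum_congr rfl fun a _ => by ring
                    _ = πbp s a' * (πe s a' / πbp s a') * (Rbar s a' - Rhat s a') := by
                        rw [← hπbp]; ring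
            _ = d0 s * ((∑ a', πe s a' * Rhat s a')
                + ∑ a', πbp s a' * (πe s a' / πbp s a') * (Rbar s a' - Rhat s a')) := by ring
      _ = ∑ s, d0 s * ∑ a, πe s a * Rbar s a := by
          refine Finset.sum_congr rfl fun s _ => ?_
          congr 1
          have hterm : ∀ a', πbp s a' * (πe s a' / πbp s a') * (Rbar s a' - Rhat s a')
              = πe s a' * (Rbar s a' - Rhat s a') := by
            intro a'
            by_cases hz : πbp s a' = 0
            · have hπez : πe s a' = 0 := by
                by_contra hne
                have hpos := hsupp s a' (lt_of_le_of_ne (hπe0 s a') (Ne.symm hne))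
                rw [hz] at hpos
                exact lt_irrefl 0 hpos
              simp [hz, hπez]
            · field_simp
          rw [Finset.sum_congr rfl fun a' _ => hterm a', ← Finset.sum_add_distrib]
          exact Finset.sum_congr rfl fun a' _ => by ring
  -- iid reduction
  have hNR : (N : ℝ) ≠ 0 := Nat.cast_ne_zero.mpr hN.ne'
  calc ∑ f : Fin N → S × A × Ω × Ωw × (A → Ωg),
        (∏ i, μ (f i)) * ((N : ℝ)⁻¹ * ∑ i, est (f i))
      = ∑ f : Fin N → S × A × Ω × Ωw × (A → Ωg), ∑ i : Fin N,
          (N : ℝ)⁻¹ * ((∏ j, μ (f j)) * est (f i)) := by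
        refine Finset.sum_congr rfl fun f _ => ?_
        rw [Finset.mul_sum, Finset.mul_sum]
        exact Finset.sum_congr rfl fun i _ => by ring
    _ = ∑ i : Fin N, ∑ f : Fin N → S × A × Ω × Ωw × (A → Ωg),
          (N : ℝ)⁻¹ * ((∏ j, μ (f j)) * est (f i)) := Finset.sum_comm
    _ = ∑ _i : Fin N, (N : ℝ)⁻¹ * ∑ z : S × A × Ω × Ωw × (A → Ωg), μ z * est z := by
        refine Finset.sum_congr rfl fun i _ => ?_
        rw [← Finset.mul_sum]
        congr 1
        exact site_lemma (fun _ => μ) i est (fun j _ => hmass)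
    _ = ∑ s, d0 s * ∑ a, πe s a * Rbar s a := by
        rw [hE, Finset.sum_const, Finset.card_univ, Fintype.card_fin, nsmul_eq_mul,
          ← mul_assoc, mul_inv_cancel₀ hNR, one_mul]
end
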